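/- arXiv:2310.20536 — 2 statements merged into one kernel-verified Lean document; each statement's English description precedes it below -/
import Mathlib

section
/- Consider a sequence of nonnegative numbers defined by the recurrence $a_1 \le \frac{N}{n_1} + \frac{M}{n_1^2}$ and $a_\ell \le a_{\ell-1} b_{\ell-1} + \frac{M}{n_\ell^2}$ for $2 \le \ell \le k$, where $n_\ell = n_{\ell-1}/b_{\ell-1}$ for positive reals $b_\ell \ge 1$ and $n_\ell \ge 2$ for all $\ell$, and additionally $\sum_{i=1}^{\ell} \frac{1}{n_i} \le 1$ for all $\ell \le k$. Then for every $\ell \le k$, $a_\ell \le \frac{N}{n_\ell} + \frac{M}{n_\ell}$, and consequently $\sum_{\ell=1}^{k} a_\ell n_\ell \le k(N + M)$. -/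
/-!
Since `b ℓ = n ℓ / n (ℓ + 1)`, one step of the recurrence turns the bound
`a ℓ ≤ N / n ℓ + (M / n ℓ) S` into `a (ℓ + 1) ≤ N / n (ℓ + 1) + (M / n (ℓ + 1)) (S + 1 / n (ℓ + 1))`.
By induction `a ℓ ≤ N / n ℓ + (M / n ℓ) ∑_{i ≤ ℓ} 1 / n i`, and the hypothesis `∑_{i ≤ ℓ} 1 / n i ≤ 1`
gives `a ℓ · n ℓ ≤ N + M` for each level.
-/

open Finset

namespace Rehashing

theorem le_div_add_mul_add_inv_of_le_mul_add {N M S x y a a' b : ℝ} (hx : 0 < x) (hy : 0 < y)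
    (hxy : y = x / b) (ha : a ≤ N / x + M / x * S) (ha' : a' ≤ a * b + M / y ^ 2) :
    a' ≤ N / y + M / y * (S + 1 / y) := by
  have hb0 : b ≠ 0 := by
    rintro rfl
    simp only [div_zero] at hxy
    exact hy.ne' hxy
  have hb : b = x / y := by
    rw [hxy]
    field_simp
  calc a' ≤ a * b + M / y ^ 2 := ha'
    _ ≤ (N / x + M / x * S) * b + M / y ^ 2 := by
        gcongr
        rw [hb]
        positivity
    _ = N / y + M / y * (S + 1 / y) := by
        rw [hb]
        field_simp
        ring

theorem le_div_add_mul_sum_inv (k : ℕ) (N M : ℝ) (a n b : ℕ → ℝ)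
    (hn : ∀ ℓ, 1 ≤ ℓ → ℓ ≤ k → 0 < n ℓ)
    (hnrec : ∀ ℓ, 2 ≤ ℓ → ℓ ≤ k → n ℓ = n (ℓ - 1) / b (ℓ - 1))
    (ha1 : a 1 ≤ N / n 1 + M / (n 1) ^ 2)
    (harec : ∀ ℓ, 2 ≤ ℓ → ℓ ≤ k → a ℓ ≤ a (ℓ - 1) * b (ℓ - 1) + M / (n ℓ) ^ 2) :
    ∀ ℓ, 1 ≤ ℓ → ℓ ≤ k → a ℓ ≤ N / n ℓ + M / n ℓ * ∑ i ∈ Icc 1 ℓ, 1 / n i := by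
  intro ℓ hℓ
  induction ℓ, hℓ using Nat.le_induction with
  | base =>
    intro _
    rw [Icc_self, sum_singleton]
    convert ha1 using 2
    ring
  | succ m hm ih =>
    intro hmk
    rw [sum_Icc_succ_top (by omega)]
    exact le_div_add_mul_add_inv_of_le_mul_add (hn m hm (by omega)) (hn (m + 1) (by omega) hmk)
      (by simpa using hnrec (m + 1) (by omega) hmk) (ih (by omega))
      (by simpa using harec (m + 1) (by omega) hmk)

theorem sum_mul_le_card_mul_of_le_div {ι : Type*} (s : Finset ι) (a n : ι → ℝ) (c : ℝ)
    (h : ∀ i ∈ s, 0 < n i ∧ a i ≤ c / n i) :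
    ∑ i ∈ s, a i * n i ≤ #s * c := by
  rw [← nsmul_eq_mul]
  refine sum_le_card_nsmul s _ c fun i hi => ?_
  obtain ⟨hn, ha⟩ := h i hi
  exact (le_div_iff₀ hn).mp ha

end Rehashing

open Rehashing in
theorem stmt_16_general (k : ℕ) (N M : ℝ) (hM : 0 ≤ M)
    (a n b : ℕ → ℝ)
    (hn2 : ∀ ℓ, 1 ≤ ℓ → ℓ ≤ k → 2 ≤ n ℓ)
    (hnrec : ∀ ℓ, 2 ≤ ℓ → ℓ ≤ k → n ℓ = n (ℓ - 1) / b (ℓ - 1))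
    (ha1 : a 1 ≤ N / n 1 + M / (n 1) ^ 2)
    (harec : ∀ ℓ, 2 ≤ ℓ → ℓ ≤ k → a ℓ ≤ a (ℓ - 1) * b (ℓ - 1) + M / (n ℓ) ^ 2)
    (hsum : ∀ ℓ, ℓ ≤ k → ∑ i ∈ Finset.Icc 1 ℓ, 1 / n i ≤ 1) :
    (∀ ℓ, 1 ≤ ℓ → ℓ ≤ k → a ℓ ≤ N / n ℓ + M / n ℓ) ∧
    ∑ ℓ ∈ Finset.Icc 1 k, a ℓ * n ℓ ≤ (k : ℝ) * (N + M) := by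
  have hn : ∀ ℓ, 1 ≤ ℓ → ℓ ≤ k → 0 < n ℓ := fun ℓ h1 h2 => by linarith [hn2 ℓ h1 h2]
  have hlevel : ∀ ℓ, 1 ≤ ℓ → ℓ ≤ k → a ℓ ≤ N / n ℓ + M / n ℓ := fun ℓ h1 h2 =>
    (le_div_add_mul_sum_inv k N M a n b hn hnrec ha1 harec ℓ h1 h2).trans <| add_le_add_right
      (mul_le_of_le_one_right (div_nonneg hM (hn ℓ h1 h2).le) (hsum ℓ h2)) _
  refine ⟨hlevel, ?_⟩
  have hsum_le := sum_mul_le_card_mul_of_le_div (Icc 1 k) a n (N + M) fun ℓ hℓ => by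
    obtain ⟨h1, h2⟩ := mem_Icc.mp hℓ
    exact ⟨hn ℓ h1 h2, add_div N M (n ℓ) ▸ hlevel ℓ h1 h2⟩
  simpa using hsum_le

/-- rehashing-cost recurrence: if `a 1 ≤ N/n 1 + M/(n 1)²`,
`a ℓ ≤ a (ℓ-1) · b (ℓ-1) + M/(n ℓ)²` with `n ℓ = n (ℓ-1)/b (ℓ-1)`, `b ℓ ≥ 1`,
`n ℓ ≥ 2`, and `∑_{i≤ℓ} 1/n i ≤ 1`, then `a ℓ ≤ N/n ℓ + M/n ℓ` for all `ℓ ≤ k`,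
and consequently `∑_{ℓ=1}^k a ℓ · n ℓ ≤ k (N + M)`. -/
theorem stmt_16 (k : ℕ) (hk : 1 ≤ k) (N M : ℝ) (hN : 0 ≤ N) (hM : 0 ≤ M)
    (a n b : ℕ → ℝ)
    (ha0 : ∀ ℓ, 0 ≤ a ℓ)
    (hb : ∀ ℓ, 1 ≤ b ℓ)
    (hn2 : ∀ ℓ, 1 ≤ ℓ → ℓ ≤ k → 2 ≤ n ℓ)
    (hnrec : ∀ ℓ, 2 ≤ ℓ → ℓ ≤ k → n ℓ = n (ℓ - 1) / b (ℓ - 1))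
    (ha1 : a 1 ≤ N / n 1 + M / (n 1) ^ 2)
    (harec : ∀ ℓ, 2 ≤ ℓ → ℓ ≤ k → a ℓ ≤ a (ℓ - 1) * b (ℓ - 1) + M / (n ℓ) ^ 2)
    (hsum : ∀ ℓ, ℓ ≤ k → ∑ i ∈ Finset.Icc 1 ℓ, 1 / n i ≤ 1) :
    (∀ ℓ, 1 ≤ ℓ → ℓ ≤ k → a ℓ ≤ N / n ℓ + M / n ℓ) ∧
    ∑ ℓ ∈ Finset.Icc 1 k, a ℓ * n ℓ ≤ (k : ℝ) * (N + M) :=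
  stmt_16_general k N M hM a n b hn2 hnrec ha1 harec hsum
end

section
/- Suppose a matching scheme assigns to each pair $(A, B)$ with $A \subseteq U$, $B \subseteq V$, $|A| \le |B|$, an injection $\sigma[A,B] : A \to B$, produced by the round-based algorithm: in each round, unmatched balls and bins are placed on a circle via a fixed hash function for that round, and each ball whose clockwise successor is a bin is matched to it. If $(A', B')$ is obtained from $(A, B)$ by inserting or deleting a single ball or bin, and the algorithm on $(A, B)$ terminates in $T$ rounds, then: (a) for each round $i$, the pair of remaining (unmatched) sets $(A'_i, B'_i)$ for input $(A', B')$ differs from $(A_i, B_i)$ for input $(A, B)$ by exactly one element (one insertion or deletion); (b) the number of rounds $T'$ on input $(A', B')$ satisfies $T' \le T + 1$. -/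
/-!
Put balls and bins on one circle. A round removes every ball whose clockwise successor is a
bin, together with that bin, so whether an element survives depends only on its own type and
on the types of its two neighbours. Inserting a point `x` between its neighbour `p` and `p`'s
old successor `s` changes neighbours only for `p`, `s` and `x`, and checking the types of
these three shows that exactly one element changes its fate: the surviving sets again differ
by one element. Iterating gives (a).

For (b): after `T` rounds nothing is left of `A`, so by (a) at most one ball of `A'` is left.
Every round keeps at least as many bins as balls and, when both are present, matches a ball,
so one more round clears `A'`.
-/

open Set

noncomputable section

/-- The set of ball–bin pairs `(a, b)` matched in one round of the dynamic matching
algorithm: `a ∈ A`, `b ∈ B`, and `b` is the clockwise successor of `a` on the circle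
(where `h` gives the positions on the unit circle, i.e. `b` minimizes the clockwise
distance `Int.fract (h c - h (inl a))` among all remaining elements `c ≠ inl a`). -/
def roundMatched {U V : Type} (h : (U ⊕ V) → ℝ) (A : Set U) (B : Set V) :
    Set (U × V) :=
  {p | p.1 ∈ A ∧ p.2 ∈ B ∧
    ∀ c : U ⊕ V, c ∈ (Sum.inl '' A ∪ Sum.inr '' B : Set (U ⊕ V)) → c ≠ Sum.inl p.1 →
      Int.fract (h (Sum.inr p.2) - h (Sum.inl p.1)) ≤ Int.fract (h c - h (Sum.inl p.1))}

/-- One round of the algorithm: remove all matched balls and bins. -/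
def roundStep {U V : Type} (h : (U ⊕ V) → ℝ) (A : Set U) (B : Set V) :
    Set U × Set V :=
  (A \ {a | ∃ b, (a, b) ∈ roundMatched h A B},
   B \ {b | ∃ a, (a, b) ∈ roundMatched h A B})

/-- `run h A B i` is the pair `(Aᵢ₊₁, Bᵢ₊₁)` of remaining unmatched balls and bins
after `i` rounds of the algorithm, where round `i` uses the fixed hash function `h i`. -/
def run {U V : Type} (h : ℕ → (U ⊕ V) → ℝ) (A : Set U) (B : Set V) : ℕ → Set U × Set V
  | 0 => (A, B)
  | i + 1 => roundStep (h (i + 1)) (run h A B i).1 (run h A B i).2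

/-- Two pairs of (ball set, bin set) differ by the insertion or deletion of a single
ball or a single bin. -/
def DiffersByOne {α β : Type} (p q : Set α × Set β) : Prop :=
  (∃ x, x ∉ p.1 ∧ q.1 = insert x p.1 ∧ q.2 = p.2) ∨
  (∃ x, x ∈ p.1 ∧ q.1 = p.1 \ {x} ∧ q.2 = p.2) ∨
  (∃ y, y ∉ p.2 ∧ q.2 = insert y p.2 ∧ q.1 = p.1) ∨
  (∃ y, y ∈ p.2 ∧ q.2 = p.2 \ {y} ∧ q.1 = p.1)


open scoped symmDiff

namespace DynamicMatching

variable {W : Type*}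

/-- Clockwise distance from `e` to `c` when `f` places the points on the circle `ℝ/ℤ`. -/
def arc (f : W → ℝ) (e c : W) : ℝ := Int.fract (f c - f e)

structure IsSucc (f : W → ℝ) (S : Set W) (e t : W) : Prop where
  mem : t ∈ S
  ne : t ≠ e
  arc_le : ∀ c ∈ S, c ≠ e → arc f e t ≤ arc f e c

section Arc

variable {f : W → ℝ} {e c c' g : W}

theorem arc_nonneg (f : W → ℝ) (e c : W) : 0 ≤ arc f e c := Int.fract_nonneg _

theorem arc_lt_one (f : W → ℝ) (e c : W) : arc f e c < 1 := Int.fract_lt_one _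

theorem arc_eq_sub_of_lt (h : arc f e c < arc f e g) : arc f c g = arc f e g - arc f e c := by
  rw [arc, Int.fract_eq_iff]
  refine ⟨by linarith, by linarith [arc_nonneg f e c, arc_lt_one f e g],
    ⌊f g - f e⌋ - ⌊f c - f e⌋, ?_⟩
  simp only [arc, Int.fract]
  push_cast
  ring

variable (hf : Function.Injective fun x => Int.fract (f x))
include hf

theorem arc_eq_zero_iff : arc f e c = 0 ↔ c = e := by
  refine ⟨fun h => hf ?_, fun h => by simp [arc, h]⟩
  obtain ⟨z, hz⟩ := Int.fract_eq_zero_iff.mp h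
  exact Int.fract_eq_fract.mpr ⟨z, hz.symm⟩

theorem arc_pos (hne : c ≠ e) : 0 < arc f e c :=
  (arc_nonneg f e c).lt_of_ne' ((arc_eq_zero_iff hf).not.mpr hne)

theorem arc_add_arc (hne : c ≠ e) : arc f e c + arc f c e = 1 := by
  have h := Int.fract_neg ((arc_eq_zero_iff hf).not.mpr hne)
  rw [neg_sub] at h
  simp only [arc] at h ⊢
  linarith

theorem arc_injective (h : arc f e c = arc f e c') : c = c' := by
  obtain ⟨z, hz⟩ := Int.fract_eq_fract.mp h
  exact hf (Int.fract_eq_fract.mpr ⟨z, by linarith⟩)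

end Arc

section Succ

variable {f : W → ℝ} {S : Set W} {e e' t t' x p : W}

theorem exists_isSucc (hS : S.Finite) (he : ∃ c ∈ S, c ≠ e) : ∃ t, IsSucc f S e t := by
  obtain ⟨t, ⟨htS, hte⟩, hmin⟩ := exists_min_image (S \ {e}) (arc f e) hS.sdiff he
  exact ⟨t, htS, hte, fun c hc hce => hmin c ⟨hc, hce⟩⟩

open Classical in
/-- Defaults to `e` when `S` has no element other than `e`; with this convention the splice
`next_insert_self` also holds for `S = {p}`. -/
def next (f : W → ℝ) (S : Set W) (e : W) : W :=
  if h : ∃ t, IsSucc f S e t then h.choose else e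

theorem next_eq_self (he : ∀ c ∈ S, c = e) : next f S e = e :=
  dif_neg fun ⟨_, ht⟩ => ht.ne (he _ ht.mem)

theorem isSucc_next (hS : S.Finite) (he : ∃ c ∈ S, c ≠ e) : IsSucc f S e (next f S e) := by
  have hex := exists_isSucc (f := f) hS he
  rw [next, dif_pos hex]
  exact hex.choose_spec

theorem mapsTo_next (hS : S.Finite) : MapsTo (next f S) S S := by
  intro e he
  by_cases h : ∃ c ∈ S, c ≠ e
  · exact (isSucc_next hS h).mem
  · push Not at h
    rwa [next_eq_self h]

variable (hf : Function.Injective fun x => Int.fract (f x))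
include hf

theorem IsSucc.unique (h : IsSucc f S e t) (h' : IsSucc f S e t') : t = t' :=
  arc_injective hf (le_antisymm (h.arc_le t' h'.mem h'.ne) (h'.arc_le t h.mem h.ne))

theorem IsSucc.left_unique (h : IsSucc f S e t) (h' : IsSucc f S e' t) (he : e ∈ S)
    (he' : e' ∈ S) : e = e' := by
  -- otherwise `t` lies strictly inside both arcs `e → e'` and `e' → e`, which make one turn
  by_contra hne
  have hlt : arc f e t < arc f e e' :=
    (h.arc_le e' he' (Ne.symm hne)).lt_of_ne fun heq => h'.ne (arc_injective hf heq)
  have := arc_eq_sub_of_lt hlt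
  have := h'.arc_le e he hne
  have := arc_add_arc hf h'.ne
  have := arc_add_arc hf (Ne.symm hne)
  have := arc_pos hf h.ne
  linarith

theorem next_eq_of_isSucc (h : IsSucc f S e t) : next f S e = t := by
  have hex : ∃ t, IsSucc f S e t := ⟨t, h⟩
  rw [next, dif_pos hex]
  exact hex.choose_spec.unique hf h

theorem isSucc_iff_next_eq (hS : S.Finite) (hte : t ≠ e) : IsSucc f S e t ↔ next f S e = t := by
  refine ⟨next_eq_of_isSucc hf, fun h => ?_⟩
  by_cases he : ∃ c ∈ S, c ≠ e
  · exact h ▸ isSucc_next hS he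
  · push Not at he
    exact absurd (h.symm.trans (next_eq_self he)) hte

theorem injOn_next (hS : S.Finite) : InjOn (next f S) S := by
  intro e he e' he' heq
  by_contra hne
  have h := isSucc_next (f := f) hS ⟨e', he', Ne.symm hne⟩
  rw [heq] at h
  exact hne (h.left_unique hf (isSucc_next hS ⟨e, he, hne⟩) he he')

theorem isSucc_insert_of_closest (hx : x ∉ S) (hp : p ∈ S)
    (hpx : ∀ c ∈ S, arc f p x ≤ arc f c x) : IsSucc f (insert x S) p x := by
  refine ⟨mem_insert _ _, fun h => hx (h ▸ hp), ?_⟩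
  rintro c (rfl | hc) hcp
  · exact le_rfl
  · by_contra hlt
    push Not at hlt
    have := arc_eq_sub_of_lt hlt
    have := arc_pos hf hcp
    have := hpx c hc
    linarith

theorem isSucc_insert_of_ne (hx : x ∉ S) (hp : p ∈ S)
    (hpx : ∀ c ∈ S, arc f p x ≤ arc f c x) (he : e ∈ S) (hep : e ≠ p) (h : IsSucc f S e t) :
    IsSucc f (insert x S) e t := by
  have hxp : x ≠ p := fun h => hx (h ▸ hp)
  refine ⟨mem_insert_of_mem _ h.mem, h.ne, ?_⟩
  rintro c (rfl | hc) hce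
  · -- otherwise `x` lies strictly between `e` and `p`, so `e` is closer to `x` than `p`
    by_contra hlt
    push Not at hlt
    have := arc_eq_sub_of_lt (hlt.trans_le (h.arc_le p hp (Ne.symm hep)))
    have := arc_add_arc hf hxp
    have := hpx e he
    have := arc_lt_one f e p
    linarith
  · exact h.arc_le c hc hce

theorem isSucc_insert_self (hx : x ∉ S) (hp : p ∈ S)
    (hpx : ∀ c ∈ S, arc f p x ≤ arc f c x) (hs : IsSucc f S p t) :
    IsSucc f (insert x S) x t := by
  refine ⟨mem_insert_of_mem _ hs.mem, fun h => hx (h ▸ hs.mem), ?_⟩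
  have hpx' := isSucc_insert_of_closest hf hx hp hpx
  have harc : ∀ c ∈ S, c ≠ p → arc f x c = arc f p c - arc f p x := fun c hc hcp =>
    arc_eq_sub_of_lt <| (hpx'.arc_le c (mem_insert_of_mem _ hc) hcp).lt_of_ne
      fun h => hx (arc_injective hf h ▸ hc)
  rintro c (rfl | hc) hcx
  · exact absurd rfl hcx
  rw [harc t hs.mem hs.ne]
  by_cases hcp : c = p
  · subst hcp
    have := arc_add_arc hf (fun h => hx (h ▸ hc) : x ≠ c)
    have := arc_lt_one f c t
    linarith
  · rw [harc c hc hcp]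
    linarith [hs.arc_le c hc hcp]

theorem next_insert_of_ne (hS : S.Finite) (hx : x ∉ S) (hp : p ∈ S)
    (hpx : ∀ c ∈ S, arc f p x ≤ arc f c x) (he : e ∈ S) (hep : e ≠ p) :
    next f (insert x S) e = next f S e :=
  next_eq_of_isSucc hf
    (isSucc_insert_of_ne hf hx hp hpx he hep (isSucc_next hS ⟨p, hp, Ne.symm hep⟩))

theorem next_insert_self (hS : S.Finite) (hx : x ∉ S) (hp : p ∈ S)
    (hpx : ∀ c ∈ S, arc f p x ≤ arc f c x) : next f (insert x S) x = next f S p := by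
  by_cases h : ∃ c ∈ S, c ≠ p
  · exact next_eq_of_isSucc hf (isSucc_insert_self hf hx hp hpx (isSucc_next hS h))
  · push Not at h
    rw [next_eq_self h]
    refine next_eq_of_isSucc hf ⟨mem_insert_of_mem _ hp, fun h => hx (h ▸ hp), ?_⟩
    rintro c (rfl | hc) hcx
    · exact absurd rfl hcx
    · rw [h c hc]

end Succ

section Unmatched

variable {β : W → Prop} {n n' : W → W} {S : Set W} {x p : W}

def HasBallPred (β : W → Prop) (n : W → W) (S : Set W) (e : W) : Prop :=
  ∃ c ∈ S, β c ∧ n c = e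

/-- The elements of `S` that survive a round, where `β` marks the balls and `n` is the
successor map: a ball is removed when its successor is a bin, and so is that bin. -/
def unmatched (β : W → Prop) (n : W → W) (S : Set W) : Set W :=
  {e ∈ S | (β e → β (n e)) ∧ (¬ β e → ¬ HasBallPred β n S e)}

theorem hasBallPred_iff (hp : p ∈ S) (e : W) :
    HasBallPred β n S e ↔ HasBallPred β n (S \ {p}) e ∨ (β p ∧ e = n p) := by
  constructor
  · rintro ⟨c, hc, hβ, rfl⟩
    by_cases hcp : c = p
    · exact Or.inr ⟨hcp ▸ hβ, hcp ▸ rfl⟩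
    · exact Or.inl ⟨c, ⟨hc, hcp⟩, hβ, rfl⟩
  · rintro (⟨c, hc, hβ, rfl⟩ | ⟨hβ, rfl⟩)
    · exact ⟨c, hc.1, hβ, rfl⟩
    · exact ⟨p, hp, hβ, rfl⟩

/-- `n'` is the successor map `n` with `x` inserted right after `p`. -/
structure IsSplice (n n' : W → W) (S : Set W) (p x : W) : Prop where
  eq_of_ne : ∀ e ∈ S, e ≠ p → n' e = n e
  pred : n' p = x
  self : n' x = n p

theorem hasBallPred_insert_iff (hp : p ∈ S) (hn' : IsSplice n n' S p x) (e : W) :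
    HasBallPred β n' (insert x S) e ↔
      HasBallPred β n (S \ {p}) e ∨ (β p ∧ e = x) ∨ (β x ∧ e = n p) := by
  constructor
  · rintro ⟨c, rfl | hc, hβ, rfl⟩
    · exact Or.inr (Or.inr ⟨hβ, hn'.self⟩)
    · by_cases hcp : c = p
      · subst hcp
        exact Or.inr (Or.inl ⟨hβ, hn'.pred⟩)
      · exact Or.inl ⟨c, ⟨hc, hcp⟩, hβ, (hn'.eq_of_ne c hc hcp).symm⟩
  · rintro (⟨c, ⟨hc, hcp⟩, hβ, rfl⟩ | ⟨hβ, rfl⟩ | ⟨hβ, rfl⟩)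
    · exact ⟨c, mem_insert_of_mem _ hc, hβ, hn'.eq_of_ne c hc hcp⟩
    · exact ⟨p, mem_insert_of_mem _ hp, hβ, hn'.pred⟩
    · exact ⟨x, mem_insert _ _, hβ, hn'.self⟩

theorem symmDiff_unmatched_subset (hp : p ∈ S) (hn' : IsSplice n n' S p x) :
    unmatched β n S ∆ unmatched β n' (insert x S) ⊆ {x, p, n p} := by
  intro e he
  by_contra hne
  simp only [mem_insert_iff, mem_singleton_iff, not_or] at hne
  obtain ⟨hex, hep, hes⟩ := hne
  have heS : e ∈ S := by
    rcases he with ⟨h, -⟩ | ⟨h, -⟩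
    · exact h.1
    · exact h.1.resolve_left hex
  simp only [mem_symmDiff, unmatched, mem_ofPred_eq, hasBallPred_iff hp,
    hasBallPred_insert_iff hp hn', hn'.eq_of_ne e heS hep, mem_insert_iff] at he
  tauto

theorem exists_symmDiff_unmatched_eq_singleton_of_splice (hx : x ∉ S) (hp : p ∈ S)
    (hmaps : MapsTo n S S) (hinj : InjOn n S) (hn' : IsSplice n n' S p x) :
    ∃ z, unmatched β n S ∆ unmatched β n' (insert x S) = {z} := by
  have hs : n p ∈ S := hmaps hp
  have hxp : x ≠ p := fun h => hx (h ▸ hp)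
  have hxs : x ≠ n p := fun h => hx (h ▸ hs)
  have hQx : ¬ HasBallPred β n (S \ {p}) x := fun ⟨c, hc, _, h⟩ => hx (h ▸ hmaps hc.1)
  have hQs : ¬ HasBallPred β n (S \ {p}) (n p) := fun ⟨c, hc, _, h⟩ => hc.2 (hinj hc.1 hp h)
  have hpredS := hasBallPred_iff (β := β) (n := n) hp
  have hpredT := hasBallPred_insert_iff (β := β) hp hn'
  suffices ∃ z ∈ ({x, p, n p} : Set W), ∀ e ∈ ({x, p, n p} : Set W),
      (e ∈ unmatched β n S ∆ unmatched β n' (insert x S) ↔ e = z) by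
    obtain ⟨z, hz, h⟩ := this
    exact ⟨z, eq_singleton_iff_unique_mem.mpr ⟨(h z hz).mpr rfl,
      fun e he => (h e (symmDiff_unmatched_subset hp hn' he)).mp he⟩⟩
  have hxU : x ∉ unmatched β n S := fun h => hx h.1
  have hxU' : x ∈ unmatched β n' (insert x S) ↔ (β x → β (n p)) ∧ (¬ β x → ¬ β p) := by
    simp [unmatched, hpredT, hn'.self, hQx, hxs]
  by_cases hsp : n p = p
  · rw [hsp] at hQs
    have hpU : p ∈ unmatched β n S := by
      simp [unmatched, hpredS, hsp, hp, hQs]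
    have hpU' : p ∈ unmatched β n' (insert x S) ↔ (β p ↔ β x) := by
      simp only [unmatched, mem_insert_iff, hpredT, hn'.pred, hQs, mem_ofPred_eq, not_or,
        not_and, not_false_eq_true, true_and]
      tauto
    simp only [hsp, mem_insert_iff, mem_singleton_iff, or_self, forall_eq_or_imp, forall_eq,
      exists_eq_or_imp, mem_symmDiff, hxU, hxU', hpU, hpU']
    by_cases hbx : β x <;> by_cases hbp : β p <;> simp [hbx, hbp, hxp, hxp.symm]
  · have hpU : p ∈ unmatched β n S ↔
        (β p → β (n p)) ∧ (¬ β p → ¬ HasBallPred β n (S \ {p}) p) := by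
      simp [unmatched, hpredS, hp, Ne.symm hsp]
    have hpU' : p ∈ unmatched β n' (insert x S) ↔
        (β p → β x) ∧ (¬ β p → ¬ HasBallPred β n (S \ {p}) p) := by
      simp [unmatched, hpredT, hp, hn'.pred, hxp.symm, Ne.symm hsp]
    have hsU : n p ∈ unmatched β n S ↔ (β (n p) → β (n (n p))) ∧ (¬ β (n p) → ¬ β p) := by
      simp [unmatched, hpredS, hs, hQs]
    have hsU' : n p ∈ unmatched β n' (insert x S) ↔
        (β (n p) → β (n (n p))) ∧ (¬ β (n p) → ¬ β x) := by
      simp [unmatched, hpredT, hs, hQs, hn'.eq_of_ne _ hs hsp, hxs.symm]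
    simp only [mem_insert_iff, mem_singleton_iff, forall_eq_or_imp, forall_eq,
      exists_eq_or_imp, mem_symmDiff, hxU, hxU', hpU, hpU', hsU, hsU']
    by_cases hbx : β x <;> by_cases hbp : β p <;> by_cases hbs : β (n p) <;>
      simp [hbx, hbp, hbs, hxp, hxs, hsp, Ne.symm hsp, hxp.symm, hxs.symm]

variable {f : W → ℝ} (hf : Function.Injective fun x => Int.fract (f x))
include hf

theorem exists_symmDiff_unmatched_next_insert_eq_singleton (hS : S.Finite) (hx : x ∉ S) :
    ∃ z, unmatched β (next f S) S ∆ unmatched β (next f (insert x S)) (insert x S) = {z} := by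
  rcases S.eq_empty_or_nonempty with rfl | hne
  · have hxx : next f {x} x = x := next_eq_self fun _ hc => hc
    refine ⟨x, ?_⟩
    ext e
    by_cases hex : e = x <;> simp [unmatched, HasBallPred, mem_symmDiff, hex, hxx]
  obtain ⟨p, hp, hpx⟩ := exists_min_image S (fun c => arc f c x) hS hne
  exact exists_symmDiff_unmatched_eq_singleton_of_splice hx hp (mapsTo_next hS) (injOn_next hf hS)
    ⟨fun e he hep => next_insert_of_ne hf hS hx hp hpx he hep,
      next_eq_of_isSucc hf (isSucc_insert_of_closest hf hx hp hpx),
      next_insert_self hf hS hx hp hpx⟩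

theorem exists_symmDiff_unmatched_next_eq_singleton {S' : Set W} (hS : S.Finite)
    (h : S ∆ S' = {x}) :
    ∃ z, unmatched β (next f S) S ∆ unmatched β (next f S') S' = {z} := by
  have hmem : ∀ e, (e ∈ S ∧ e ∉ S' ∨ e ∈ S' ∧ e ∉ S) ↔ e = x := fun e => by
    simpa only [mem_symmDiff, mem_singleton_iff] using Set.ext_iff.mp h e
  by_cases hx : x ∈ S
  · have hx' : x ∉ S' := fun h' => by simpa [hx, h'] using hmem x
    have hS' : S = insert x S' := ext fun e => by have := hmem e; grind
    rw [symmDiff_comm, hS']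
    exact exists_symmDiff_unmatched_next_insert_eq_singleton hf
      (hS.subset (hS' ▸ subset_insert x S')) hx'
  · have hS' : S' = insert x S := ext fun e => by have := hmem e; grind
    rw [hS']
    exact exists_symmDiff_unmatched_next_insert_eq_singleton hf hS hx

end Unmatched

theorem ncard_image_fst_eq_ncard_image_snd {α β : Type*} {R : Set (α × β)}
    (hfst : ∀ a b b', (a, b) ∈ R → (a, b') ∈ R → b = b')
    (hsnd : ∀ a a' b, (a, b) ∈ R → (a', b) ∈ R → a = a') :
    (Prod.fst '' R).ncard = (Prod.snd '' R).ncard := by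
  rw [InjOn.ncard_image, InjOn.ncard_image]
  · rintro ⟨a, b⟩ hab ⟨a', b'⟩ hab' (rfl : b = b')
    rw [hsnd a a' b hab hab']
  · rintro ⟨a, b⟩ hab ⟨a', b'⟩ hab' (rfl : a = a')
    rw [hfst a b b' hab hab']

section Rounds

variable {U V : Type} {h : U ⊕ V → ℝ} {A : Set U} {B : Set V}

def ballsAndBins (A : Set U) (B : Set V) : Set (U ⊕ V) := Sum.inl '' A ∪ Sum.inr '' B

@[simp, grind =] theorem inl_mem_ballsAndBins {a : U} : Sum.inl a ∈ ballsAndBins A B ↔ a ∈ A := by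
  simp [ballsAndBins]

@[simp, grind =] theorem inr_mem_ballsAndBins {b : V} : Sum.inr b ∈ ballsAndBins A B ↔ b ∈ B := by
  simp [ballsAndBins]

theorem finite_ballsAndBins (hA : A.Finite) (hB : B.Finite) : (ballsAndBins A B).Finite :=
  (hA.image _).union (hB.image _)

theorem differsByOne_iff {p q : Set U × Set V} :
    DiffersByOne p q ↔ ∃ z, ballsAndBins p.1 p.2 ∆ ballsAndBins q.1 q.2 = {z} := by
  obtain ⟨A, B⟩ := p
  obtain ⟨A', B'⟩ := q
  constructor
  · rintro (⟨x, hx, h1, h2⟩ | ⟨x, hx, h1, h2⟩ | ⟨y, hy, h1, h2⟩ | ⟨y, hy, h1, h2⟩) <;>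
      dsimp only at * <;> subst h1 h2
    · exact ⟨Sum.inl x, by ext (a | b) <;> grind⟩
    · exact ⟨Sum.inl x, by ext (a | b) <;> grind⟩
    · exact ⟨Sum.inr y, by ext (a | b) <;> grind⟩
    · exact ⟨Sum.inr y, by ext (a | b) <;> grind⟩
  · rintro ⟨z, hz⟩
    have hA : ∀ a, (a ∈ A ∧ a ∉ A' ∨ a ∈ A' ∧ a ∉ A) ↔ Sum.inl a = z := fun a => by
      simpa [mem_symmDiff] using Set.ext_iff.mp hz (Sum.inl a)
    have hB : ∀ b, (b ∈ B ∧ b ∉ B' ∨ b ∈ B' ∧ b ∉ B) ↔ Sum.inr b = z := fun b => by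
      simpa [mem_symmDiff] using Set.ext_iff.mp hz (Sum.inr b)
    rcases z with x | y
    · have hBB : B' = B := ext fun b => by grind
      by_cases hx : x ∈ A
      · exact Or.inr (Or.inl ⟨x, hx, ext fun a => by grind, hBB⟩)
      · exact Or.inl ⟨x, hx, ext fun a => by grind, hBB⟩
    · have hAA : A' = A := ext fun a => by grind
      by_cases hy : y ∈ B
      · exact Or.inr (Or.inr (Or.inr ⟨y, hy, ext fun b => by grind, hAA⟩))
      · exact Or.inr (Or.inr (Or.inl ⟨y, hy, ext fun b => by grind, hAA⟩))

theorem DiffersByOne.fst_subsingleton {α β : Type} {p q : Set α × Set β}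
    (hpq : DiffersByOne p q) (hp : p.1 = ∅) : q.1.Subsingleton := by
  rcases hpq with ⟨x, -, h, -⟩ | ⟨x, -, h, -⟩ | ⟨y, -, -, h⟩ | ⟨y, -, -, h⟩ <;>
    simp [h, hp]

theorem mem_roundMatched_iff_isSucc {a : U} {b : V} :
    (a, b) ∈ roundMatched h A B ↔ a ∈ A ∧ IsSucc h (ballsAndBins A B) (Sum.inl a) (Sum.inr b) :=
  ⟨fun ⟨ha, hb, hmin⟩ => ⟨ha, inr_mem_ballsAndBins.mpr hb, Sum.inr_ne_inl, hmin⟩,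
    fun ⟨ha, hs⟩ => ⟨ha, inr_mem_ballsAndBins.mp hs.mem, hs.arc_le⟩⟩

variable (hf : Function.Injective fun x => Int.fract (h x))
include hf

theorem mem_roundMatched_iff (hS : (ballsAndBins A B).Finite) {a : U} {b : V} :
    (a, b) ∈ roundMatched h A B ↔ a ∈ A ∧ next h (ballsAndBins A B) (Sum.inl a) = Sum.inr b := by
  rw [← isSucc_iff_next_eq hf hS Sum.inr_ne_inl, mem_roundMatched_iff_isSucc]

theorem ballsAndBins_roundStep (hS : (ballsAndBins A B).Finite) :
    ballsAndBins (roundStep h A B).1 (roundStep h A B).2 =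
      unmatched (fun e => e.isLeft) (next h (ballsAndBins A B)) (ballsAndBins A B) := by
  ext (a | b)
  · rcases hn : next h (ballsAndBins A B) (Sum.inl a) with a' | b' <;>
      simp [roundStep, mem_roundMatched_iff hf hS, unmatched, hn]
  · simp [roundStep, mem_roundMatched_iff hf hS, unmatched, HasBallPred]

theorem differsByOne_roundStep {p q : Set U × Set V} (hp1 : p.1.Finite) (hp2 : p.2.Finite)
    (hq1 : q.1.Finite) (hq2 : q.2.Finite) (hpq : DiffersByOne p q) :
    DiffersByOne (roundStep h p.1 p.2) (roundStep h q.1 q.2) := by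
  have hp := finite_ballsAndBins hp1 hp2
  rw [differsByOne_iff] at hpq ⊢
  rw [ballsAndBins_roundStep hf hp, ballsAndBins_roundStep hf (finite_ballsAndBins hq1 hq2)]
  obtain ⟨z, hz⟩ := hpq
  exact exists_symmDiff_unmatched_next_eq_singleton hf hp hz

theorem ncard_roundStep_fst_le_snd (hA : A.Finite) (hB : B.Finite) (hAB : A.ncard ≤ B.ncard) :
    (roundStep h A B).1.ncard ≤ (roundStep h A B).2.ncard := by
  have hS := finite_ballsAndBins hA hB
  simp only [roundStep]
  set M := roundMatched h A B
  have hfst : {a | ∃ b, (a, b) ∈ M} = Prod.fst '' M := by ext; simp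
  have hsnd : {b | ∃ a, (a, b) ∈ M} = Prod.snd '' M := by ext; simp
  have hMA : Prod.fst '' M ⊆ A := by
    rintro _ ⟨⟨a, b⟩, hab, rfl⟩
    exact (mem_roundMatched_iff_isSucc.mp hab).1
  have hMB : Prod.snd '' M ⊆ B := by
    rintro _ ⟨⟨a, b⟩, hab, rfl⟩
    exact inr_mem_ballsAndBins.mp (mem_roundMatched_iff_isSucc.mp hab).2.mem
  have hcard : (Prod.fst '' M).ncard = (Prod.snd '' M).ncard := by
    refine ncard_image_fst_eq_ncard_image_snd (fun a b b' hab hab' => ?_)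
      (fun a a' b hab hab' => ?_)
    · rw [mem_roundMatched_iff hf hS] at hab hab'
      exact Sum.inr_injective (hab.2.symm.trans hab'.2)
    · rw [mem_roundMatched_iff hf hS] at hab hab'
      exact Sum.inl_injective <| injOn_next hf hS (inl_mem_ballsAndBins.mpr hab.1)
        (inl_mem_ballsAndBins.mpr hab'.1) (hab.2.trans hab'.2.symm)
  rw [hfst, hsnd, ncard_sdiff hMA (hA.subset hMA), ncard_sdiff hMB (hB.subset hMB), hcard]
  omega

/-- The closest ball–bin pair is matched. -/
theorem exists_mem_roundMatched (hA : A.Finite) (hB : B.Finite) (hA0 : A.Nonempty)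
    (hB0 : B.Nonempty) : ∃ a b, (a, b) ∈ roundMatched h A B := by
  obtain ⟨⟨a, b⟩, ⟨ha, hb⟩, hmin⟩ := exists_min_image (A ×ˢ B)
    (fun q => arc h (Sum.inl q.1) (Sum.inr q.2)) (hA.prod hB) (hA0.prod hB0)
  refine ⟨a, b, mem_roundMatched_iff_isSucc.mpr
    ⟨ha, inr_mem_ballsAndBins.mpr hb, Sum.inr_ne_inl, ?_⟩⟩
  rintro (a' | b') hc hne
  · by_contra hlt
    push Not at hlt
    have := arc_eq_sub_of_lt hlt
    have := arc_pos hf hne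
    have : arc h (Sum.inl a) (Sum.inr b) ≤ arc h (Sum.inl a') (Sum.inr b) :=
      hmin (a', b) ⟨inl_mem_ballsAndBins.mp hc, hb⟩
    linarith
  · exact hmin (a, b') ⟨ha, inr_mem_ballsAndBins.mp hc⟩

theorem roundStep_fst_ssubset (hA : A.Finite) (hB : B.Finite) (hA0 : A.Nonempty)
    (hB0 : B.Nonempty) : (roundStep h A B).1 ⊂ A := by
  obtain ⟨a, b, hab⟩ := exists_mem_roundMatched hf hA hB hA0 hB0
  exact (ssubset_iff_of_subset sdiff_subset).mpr
    ⟨a, (mem_roundMatched_iff_isSucc.mp hab).1, fun h => h.2 ⟨b, hab⟩⟩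

end Rounds

section Run

variable {U V : Type} (h : ℕ → U ⊕ V → ℝ) {A : Set U} {B : Set V}

theorem run_subset (A : Set U) (B : Set V) (i : ℕ) :
    (run h A B i).1 ⊆ A ∧ (run h A B i).2 ⊆ B := by
  induction i with
  | zero => exact ⟨subset_rfl, subset_rfl⟩
  | succ i ih => exact ⟨sdiff_subset.trans ih.1, sdiff_subset.trans ih.2⟩

variable {h} (hf : ∀ i, Function.Injective fun x => Int.fract (h i x))
  (hA : A.Finite) (hB : B.Finite)
include hf hA hB

theorem ncard_run_fst_le_snd (hAB : A.ncard ≤ B.ncard) (i : ℕ) :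
    (run h A B i).1.ncard ≤ (run h A B i).2.ncard := by
  induction i with
  | zero => exact hAB
  | succ i ih =>
    exact ncard_roundStep_fst_le_snd (hf _) (hA.subset (run_subset h A B i).1)
      (hB.subset (run_subset h A B i).2) ih

theorem differsByOne_run {A' : Set U} {B' : Set V} (hA' : A'.Finite) (hB' : B'.Finite)
    (hop : DiffersByOne (A, B) (A', B')) (i : ℕ) :
    DiffersByOne (run h A B i) (run h A' B' i) := by
  induction i with
  | zero => exact hop
  | succ i ih =>
    exact differsByOne_roundStep (hf _) (hA.subset (run_subset h A B i).1)
      (hB.subset (run_subset h A B i).2) (hA'.subset (run_subset h A' B' i).1)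
      (hB'.subset (run_subset h A' B' i).2) ih

theorem run_succ_fst_eq_empty (hAB : A.ncard ≤ B.ncard) {i : ℕ} {x : U}
    (hx : (run h A B i).1 = {x}) : (run h A B (i + 1)).1 = ∅ := by
  have hbins : (run h A B i).2.Nonempty := by
    refine nonempty_of_ncard_ne_zero (Nat.pos_iff_ne_zero.mp ?_)
    calc 0 < (run h A B i).1.ncard := by simp [hx]
      _ ≤ _ := ncard_run_fst_le_snd hf hA hB hAB i
  have hss : (run h A B (i + 1)).1 ⊂ (run h A B i).1 :=
    roundStep_fst_ssubset (hf _) (hA.subset (run_subset h A B i).1)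
      (hB.subset (run_subset h A B i).2) (by rw [hx]; exact singleton_nonempty x) hbins
  rw [hx] at hss
  exact eq_empty_of_ssubset_singleton hss

end Run

end DynamicMatching

open DynamicMatching

theorem stmt_18_general {U V : Type} (h : ℕ → (U ⊕ V) → ℝ)
    (hinj : ∀ i, Function.Injective (fun x => Int.fract (h i x)))
    (A : Set U) (B : Set V) (A' : Set U) (B' : Set V)
    (hAfin : A.Finite) (hBfin : B.Finite) (hA'fin : A'.Finite) (hB'fin : B'.Finite)
    (hcard' : A'.ncard ≤ B'.ncard)
    (hop : DiffersByOne (A, B) (A', B'))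
    (T T' : ℕ)
    (hT : (run h A B T).1 = ∅)
    (hT'min : ∀ j < T', (run h A' B' j).1 ≠ ∅) :
    (∀ i < max T T', DiffersByOne (run h A B i) (run h A' B' i)) ∧ T' ≤ T + 1 := by
  have hdiff := differsByOne_run hinj hAfin hBfin hA'fin hB'fin hop
  refine ⟨fun i _ => hdiff i, ?_⟩
  by_contra! hlt
  obtain ⟨x, hx⟩ : ∃ x, (run h A' B' T).1 = {x} :=
    ((hdiff T).fst_subsingleton hT).eq_empty_or_singleton.resolve_left (hT'min T (by omega))
  exact hT'min (T + 1) (by omega) (run_succ_fst_eq_empty hinj hA'fin hB'fin hcard' hx)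

/-- if `(A', B')` is obtained from `(A, B)` by a single insertion or
deletion, the algorithm on `(A, B)` terminates within `T` rounds, and `T'` is the exact
number of rounds on `(A', B')`, then (a) for each round, the pairs of remaining sets in
the two executions differ by a single element, and (b) `T' ≤ T + 1`. -/
theorem stmt_18 {U V : Type} (h : ℕ → (U ⊕ V) → ℝ)
    (hinj : ∀ i, Function.Injective (fun x => Int.fract (h i x)))
    (A : Set U) (B : Set V) (A' : Set U) (B' : Set V)
    (hAfin : A.Finite) (hBfin : B.Finite) (hA'fin : A'.Finite) (hB'fin : B'.Finite)
    (hcard : A.ncard ≤ B.ncard) (hcard' : A'.ncard ≤ B'.ncard)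
    (hop : DiffersByOne (A, B) (A', B'))
    (T T' : ℕ)
    (hT : (run h A B T).1 = ∅)
    (hT' : (run h A' B' T').1 = ∅)
    (hT'min : ∀ j < T', (run h A' B' j).1 ≠ ∅) :
    (∀ i < max T T', DiffersByOne (run h A B i) (run h A' B' i)) ∧ T' ≤ T + 1 :=
  stmt_18_general h hinj A B A' B' hAfin hBfin hA'fin hB'fin hcard' hop T T' hT hT'min

end
end
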